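/- For every integer n ≥ 3, there exists an orientation preserving piecewise linear homeomorphism F : R^2 → R^2 with F(Z^2) = Z^2 such that F^n = id and F^k ≠ id for 1 ≤ k < n. -/

import Mathlib

/-- The closed rational sector in ℝ² generated by `u, v ∈ ℤ²`. -/
def secR (u v : ℤ × ℤ) : Set (ℝ × ℝ) :=
  {x | ∃ s t : ℝ, 0 ≤ s ∧ 0 ≤ t ∧
    x.1 = s * (u.1 : ℝ) + t * (v.1 : ℝ) ∧ x.2 = s * (u.2 : ℝ) + t * (v.2 : ℝ)}

/-- The lattice ℤ² inside ℝ². -/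
def latticePts : Set (ℝ × ℝ) := {x | ∃ p : ℤ × ℤ, x = ((p.1 : ℝ), (p.2 : ℝ))}

/-!
Take primitive vectors `v₀, …, v_{n-1}` of `ℤ²` winding once counterclockwise around the origin
with `det (vᵢ, vᵢ₊₁) = 1`, here `(1,0), (n-3,1), (n-4,1), …, (0,1), (-1,-1)`. The linear map
sending `vᵢ ↦ vᵢ₊₁`, `vᵢ₊₁ ↦ vᵢ₊₂` lies in `SL₂(ℤ)`, and two consecutive such maps agree on the
common ray, so they glue to a piecewise linear map `F` preserving `ℤ²` that rotates the fan by one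
sector. Hence `F^[n] = id`, while for `0 < k < n` the map `F^[k]` sends `v₀` to `vₖ ≠ v₀`.
-/

open Function

namespace FanRotation

section Cross

variable {R : Type*} [CommRing R]

def cross (x y : R × R) : R := x.1 * y.2 - x.2 * y.1

def turn (u v w x : R × R) : R × R := cross x v • v + cross u x • w

theorem cross_smul_add_cross_smul (u v x : R × R) :
    cross x v • u + cross u x • v = cross u v • x := by
  ext <;> simp only [cross, Prod.smul_fst, Prod.smul_snd, Prod.fst_add, Prod.snd_add,
    smul_eq_mul] <;> ring

theorem cross_comm (x y : R × R) : cross y x = -cross x y := by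
  simp only [cross]; ring

theorem cross_left_smul_add_smul (u v : R × R) (s t : R) :
    cross u (s • u + t • v) = t * cross u v := by
  simp only [cross, Prod.smul_fst, Prod.smul_snd, Prod.fst_add, Prod.snd_add, smul_eq_mul]; ring

theorem cross_right_smul_add_smul (u v : R × R) (s t : R) :
    cross v (s • u + t • v) = -(s * cross u v) := by
  simp only [cross, Prod.smul_fst, Prod.smul_snd, Prod.fst_add, Prod.snd_add, smul_eq_mul]; ring

theorem turn_smul_add_smul (u v w : R × R) (s t : R) :
    turn u v w (s • u + t • v) = cross u v • (s • v + t • w) := by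
  ext <;> simp only [turn, cross, Prod.smul_fst, Prod.smul_snd, Prod.fst_add, Prod.snd_add,
    smul_eq_mul] <;> ring

theorem turn_zero (u v w : R × R) : turn u v w 0 = 0 := by
  simp [turn, cross]

theorem exists_linear_turn (u v w : R × R) :
    ∃ a b c e : R, a * e - b * c = cross u v * cross v w ∧
      ∀ x, turn u v w x = (a * x.1 + b * x.2, c * x.1 + e * x.2) :=
  ⟨v.1 * v.2 - u.2 * w.1, u.1 * w.1 - v.1 * v.1, v.2 * v.2 - u.2 * w.2, u.1 * w.2 - v.1 * v.2,
    by simp only [cross]; ring,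
    fun x => by ext <;> simp only [turn, cross, Prod.smul_fst, Prod.smul_snd, Prod.fst_add,
      Prod.snd_add, smul_eq_mul] <;> ring⟩

end Cross

def ofInt (p : ℤ × ℤ) : ℝ × ℝ := ((p.1 : ℝ), (p.2 : ℝ))

theorem ofInt_injective : Injective ofInt := by
  intro p q h
  simp only [ofInt, Prod.mk.injEq, Int.cast_inj] at h
  exact Prod.ext h.1 h.2

theorem cross_ofInt (u v : ℤ × ℤ) : cross (ofInt u) (ofInt v) = ((cross u v : ℤ) : ℝ) := by
  simp [cross, ofInt]

theorem turn_ofInt (u v w p : ℤ × ℤ) :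
    turn (ofInt u) (ofInt v) (ofInt w) (ofInt p) = ofInt (turn u v w p) := by
  ext <;> simp [turn, cross, ofInt]

theorem mem_secR (u v : ℤ × ℤ) (x : ℝ × ℝ) :
    x ∈ secR u v ↔ ∃ s t : ℝ, 0 ≤ s ∧ 0 ≤ t ∧ x = s • ofInt u + t • ofInt v := by
  simp only [secR, Set.mem_ofPred_eq, Prod.ext_iff, ofInt, Prod.fst_add, Prod.snd_add,
    Prod.smul_fst, Prod.smul_snd, smul_eq_mul]

theorem mem_secR_iff {u v : ℤ × ℤ} (huv : 0 < cross u v) (x : ℝ × ℝ) :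
    x ∈ secR u v ↔ 0 ≤ cross (ofInt u) x ∧ cross (ofInt v) x ≤ 0 := by
  have hc : (0 : ℝ) < cross (ofInt u) (ofInt v) := by rw [cross_ofInt]; exact_mod_cast huv
  rw [mem_secR]
  constructor
  · rintro ⟨s, t, hs, ht, rfl⟩
    rw [cross_left_smul_add_smul, cross_right_smul_add_smul]
    exact ⟨by positivity, by simpa using by positivity⟩
  · rintro ⟨hu, hv⟩
    refine ⟨-cross (ofInt v) x / cross (ofInt u) (ofInt v),
      cross (ofInt u) x / cross (ofInt u) (ofInt v), by apply div_nonneg <;> linarith,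
      by positivity, ?_⟩
    rw [div_eq_inv_mul, div_eq_inv_mul, mul_smul, mul_smul, ← smul_add, ← cross_comm,
      cross_smul_add_cross_smul, inv_smul_smul₀ hc.ne']

theorem exists_nonneg_nonpos_succ {f : ℕ → ℝ} {a b : ℕ} (hab : a < b) (ha : 0 ≤ f a)
    (hb : f b ≤ 0) : ∃ i, 0 ≤ f i ∧ f (i + 1) ≤ 0 := by
  induction b, hab using Nat.le_induction with
  | base => exact ⟨a, ha, hb⟩
  | succ b _ ih =>
    by_cases hfb : f b ≤ 0
    · exact ih hfb
    · exact ⟨b, (lt_of_not_ge hfb).le, hb⟩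

theorem image_eq_of_mapsTo_of_iterate_eq_id {X : Type*} {f : X → X} {s : Set X} {n : ℕ}
    (hs : Set.MapsTo f s s) (hf : f^[n] = id) (hn : 0 < n) : f '' s = s := by
  refine (hs.image_subset).antisymm fun y hy => ⟨f^[n - 1] y, hs.iterate (n - 1) hy, ?_⟩
  rw [← iterate_succ_apply' f, Nat.succ_eq_add_one, Nat.sub_one_add_one hn.ne', hf, id]

theorem exists_homeomorph_of_iterate_eq_id {X : Type*} [TopologicalSpace X] {f : X → X} {n : ℕ}
    (hcont : Continuous f) (hf : f^[n] = id) (hn : 0 < n) : ∃ H : X ≃ₜ X, ⇑H = f := by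
  have hinv : LeftInverse f^[n - 1] f ∧ RightInverse f^[n - 1] f := by
    refine ⟨fun x => ?_, fun x => ?_⟩
    · rw [← iterate_succ_apply, Nat.succ_eq_add_one, Nat.sub_one_add_one hn.ne', hf, id]
    · rw [← iterate_succ_apply' f, Nat.succ_eq_add_one, Nat.sub_one_add_one hn.ne', hf, id]
  exact ⟨⟨⟨f, f^[n - 1], hinv.1, hinv.2⟩, hcont, hcont.iterate _⟩, rfl⟩

def sector (w : ℕ → ℤ × ℤ) (i : ℕ) : Set (ℝ × ℝ) := secR (w i) (w (i + 1))

def piece (w : ℕ → ℤ × ℤ) (i : ℕ) : ℝ × ℝ → ℝ × ℝ :=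
  turn (ofInt (w i)) (ofInt (w (i + 1))) (ofInt (w (i + 2)))

structure IsUnimodularFan (w : ℕ → ℤ × ℤ) (n : ℕ) : Prop where
  pos : 0 < n
  periodic : Periodic w n
  cross_eq_one : ∀ i, cross (w i) (w (i + 1)) = 1
  exists_mem_sector : ∀ x, ∃ i, x ∈ sector w i
  adjacent_of_mem_sector : ∀ i < n, ∀ j < n, ∀ x ∈ sector w i, x ∈ sector w j → x ≠ 0 →
    i = j ∨ (i + 1) % n = j ∨ (j + 1) % n = i

open Classical in
noncomputable def rotation (w : ℕ → ℤ × ℤ) (x : ℝ × ℝ) : ℝ × ℝ :=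
  if h : ∃ i, x ∈ sector w i then piece w (Nat.find h) x else x

theorem mem_sector_iff {w : ℕ → ℤ × ℤ} {i : ℕ} (h : cross (w i) (w (i + 1)) = 1) (x : ℝ × ℝ) :
    x ∈ sector w i ↔ 0 ≤ cross (ofInt (w i)) x ∧ cross (ofInt (w (i + 1))) x ≤ 0 :=
  mem_secR_iff (by rw [h]; exact one_pos) x

namespace IsUnimodularFan

variable {w : ℕ → ℤ × ℤ} {n : ℕ}

theorem sector_periodic (hw : IsUnimodularFan w n) : Periodic (sector w) n := fun i => by
  simp only [sector, hw.periodic i, Nat.add_right_comm i n 1, hw.periodic (i + 1)]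

theorem piece_periodic (hw : IsUnimodularFan w n) : Periodic (piece w) n := fun i => by
  simp only [piece, hw.periodic i, Nat.add_right_comm i n, hw.periodic (i + 1), hw.periodic (i + 2)]

theorem cross_ofInt_eq_one (hw : IsUnimodularFan w n) (i : ℕ) :
    cross (ofInt (w i)) (ofInt (w (i + 1))) = 1 := by
  rw [cross_ofInt, hw.cross_eq_one, Int.cast_one]

theorem piece_smul_add_smul (hw : IsUnimodularFan w n) (i : ℕ) (s t : ℝ) :
    piece w i (s • ofInt (w i) + t • ofInt (w (i + 1))) =
      s • ofInt (w (i + 1)) + t • ofInt (w (i + 2)) := by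
  rw [piece, turn_smul_add_smul, hw.cross_ofInt_eq_one, one_smul]

theorem piece_eq_piece_succ (hw : IsUnimodularFan w n) {i : ℕ} {x : ℝ × ℝ}
    (hi : x ∈ sector w i) (hi' : x ∈ sector w (i + 1)) : piece w i x = piece w (i + 1) x := by
  obtain ⟨-, hx⟩ := (mem_sector_iff (hw.cross_eq_one i) x).1 hi
  obtain ⟨hx', -⟩ := (mem_sector_iff (hw.cross_eq_one (i + 1)) x).1 hi'
  set a := cross (ofInt (w i)) x
  have hray : x = a • ofInt (w (i + 1)) := by
    have h := cross_smul_add_cross_smul (ofInt (w i)) (ofInt (w (i + 1))) x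
    rwa [cross_comm (ofInt (w (i + 1))) x, le_antisymm hx hx', neg_zero, zero_smul, zero_add,
      hw.cross_ofInt_eq_one, one_smul, eq_comm] at h
  calc piece w i x = piece w i ((0 : ℝ) • ofInt (w i) + a • ofInt (w (i + 1))) := by
        rw [zero_smul, zero_add, ← hray]
    _ = piece w (i + 1) (a • ofInt (w (i + 1)) + (0 : ℝ) • ofInt (w (i + 1 + 1))) := by
        rw [hw.piece_smul_add_smul, hw.piece_smul_add_smul]; simp
    _ = piece w (i + 1) x := by rw [zero_smul, add_zero, ← hray]

theorem piece_eq_piece (hw : IsUnimodularFan w n) {i j : ℕ} {x : ℝ × ℝ}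
    (hi : x ∈ sector w i) (hj : x ∈ sector w j) : piece w i x = piece w j x := by
  by_cases hx : x = 0
  · simp only [hx, piece, turn_zero]
  have hsec := hw.sector_periodic.map_mod_nat
  have hpiece := hw.piece_periodic.map_mod_nat
  rw [← hsec i] at hi
  rw [← hsec j] at hj
  rw [← hpiece i, ← hpiece j]
  rcases hw.adjacent_of_mem_sector _ (Nat.mod_lt i hw.pos) _ (Nat.mod_lt j hw.pos) x hi hj hx
    with h | h | h
  · rw [h]
  · rw [← h, hsec] at hj
    rw [hw.piece_eq_piece_succ hi hj, ← h, hpiece]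
  · rw [← h, hsec] at hi
    rw [hw.piece_eq_piece_succ hj hi, ← h, hpiece]

theorem rotation_eq_piece (hw : IsUnimodularFan w n) {i : ℕ} {x : ℝ × ℝ}
    (hx : x ∈ sector w i) : rotation w x = piece w i x := by
  classical
  have h : ∃ i, x ∈ sector w i := ⟨i, hx⟩
  rw [rotation, dif_pos h]
  exact hw.piece_eq_piece (Nat.find_spec h) hx

theorem iterate_rotation_smul_add_smul (hw : IsUnimodularFan w n) {s t : ℝ} (hs : 0 ≤ s)
    (ht : 0 ≤ t) (k i : ℕ) :
    (rotation w)^[k] (s • ofInt (w i) + t • ofInt (w (i + 1))) =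
      s • ofInt (w (i + k)) + t • ofInt (w (i + k + 1)) := by
  induction k generalizing i with
  | zero => rfl
  | succ k ih =>
    have hmem : s • ofInt (w i) + t • ofInt (w (i + 1)) ∈ sector w i :=
      (mem_secR _ _ _).2 ⟨s, t, hs, ht, rfl⟩
    rw [iterate_succ_apply, hw.rotation_eq_piece hmem, hw.piece_smul_add_smul, ih (i + 1)]
    simp only [Nat.add_right_comm i 1 k, ← Nat.add_assoc]

theorem iterate_rotation_period (hw : IsUnimodularFan w n) : (rotation w)^[n] = id := by
  funext x
  obtain ⟨i, hi⟩ := hw.exists_mem_sector x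
  obtain ⟨s, t, hs, ht, rfl⟩ := (mem_secR _ _ _).1 hi
  rw [hw.iterate_rotation_smul_add_smul hs ht, Nat.add_right_comm, hw.periodic, hw.periodic, id]

theorem iterate_rotation_ne_id (hw : IsUnimodularFan w n) {k : ℕ} (hk : w k ≠ w 0) :
    (rotation w)^[k] ≠ id := by
  intro h
  have h0 := hw.iterate_rotation_smul_add_smul zero_le_one le_rfl k 0
  simp only [h, id, one_smul, zero_smul, add_zero, zero_add] at h0
  exact hk (ofInt_injective h0.symm)

theorem exists_mem_sector_lt (hw : IsUnimodularFan w n) (x : ℝ × ℝ) :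
    ∃ i < n, x ∈ sector w i := by
  obtain ⟨i, hi⟩ := hw.exists_mem_sector x
  exact ⟨i % n, Nat.mod_lt i hw.pos, by rwa [hw.sector_periodic.map_mod_nat]⟩

theorem isClosed_sector (hw : IsUnimodularFan w n) (i : ℕ) : IsClosed (sector w i) := by
  have h : sector w i = {x | 0 ≤ cross (ofInt (w i)) x} ∩ {x | cross (ofInt (w (i + 1))) x ≤ 0} :=
    Set.ext (mem_sector_iff (hw.cross_eq_one i))
  rw [h]
  exact (isClosed_le continuous_const (by unfold cross; fun_prop)).inter
    (isClosed_le (by unfold cross; fun_prop) continuous_const)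

theorem continuous_rotation (hw : IsUnimodularFan w n) : Continuous (rotation w) := by
  refine LocallyFinite.continuous (locallyFinite_of_finite fun i : Fin n => sector w i) ?_
    (fun i => hw.isClosed_sector i) fun i => ?_
  · refine Set.eq_univ_of_forall fun x => ?_
    obtain ⟨i, hi, hx⟩ := hw.exists_mem_sector_lt x
    exact Set.mem_iUnion.2 ⟨⟨i, hi⟩, hx⟩
  · have hpiece : Continuous (piece w i) := by unfold piece turn cross; fun_prop
    exact hpiece.continuousOn.congr fun x hx => hw.rotation_eq_piece hx

theorem mapsTo_rotation_latticePts (hw : IsUnimodularFan w n) :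
    Set.MapsTo (rotation w) latticePts latticePts := by
  rintro _ ⟨p, rfl⟩
  obtain ⟨i, hi⟩ := hw.exists_mem_sector (ofInt p)
  exact ⟨turn (w i) (w (i + 1)) (w (i + 2)) p, by
    change rotation w (ofInt p) = ofInt _
    rw [hw.rotation_eq_piece hi, piece, turn_ofInt]⟩

theorem iUnion_sector (hw : IsUnimodularFan w n) :
    ⋃ i ∈ Finset.range n, sector w i = Set.univ := by
  refine Set.eq_univ_of_forall fun x => ?_
  obtain ⟨i, hi, hx⟩ := hw.exists_mem_sector_lt x
  exact Set.mem_biUnion (Finset.mem_range.2 hi) hx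

theorem exists_linear_eq_rotation (hw : IsUnimodularFan w n) (i : ℕ) :
    ∃ a b c e : ℝ, 0 < a * e - b * c ∧
      ∀ x ∈ sector w i, rotation w x = (a * x.1 + b * x.2, c * x.1 + e * x.2) := by
  obtain ⟨a, b, c, e, hdet, hlin⟩ :=
    exists_linear_turn (ofInt (w i)) (ofInt (w (i + 1))) (ofInt (w (i + 2)))
  refine ⟨a, b, c, e, ?_, fun x hx => by rw [hw.rotation_eq_piece hx, piece, hlin]⟩
  rw [hdet, hw.cross_ofInt_eq_one, hw.cross_ofInt_eq_one]
  norm_num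

end IsUnimodularFan

def stdFan (n i : ℕ) : ℤ × ℤ :=
  if i % n = 0 then (1, 0) else if i % n = n - 1 then (-1, -1) else ((n : ℤ) - 2 - (i % n : ℕ), 1)

section StdFan

variable {n : ℕ}

theorem stdFan_periodic (n : ℕ) : Periodic (stdFan n) n := fun i => by
  simp only [stdFan, Nat.add_mod_right]

theorem stdFan_zero (n : ℕ) : stdFan n 0 = (1, 0) := by simp [stdFan]

theorem stdFan_self (n : ℕ) : stdFan n n = (1, 0) := by simp [stdFan]

theorem stdFan_sub_one (hn : 2 ≤ n) : stdFan n (n - 1) = (-1, -1) := by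
  simp [stdFan, Nat.mod_eq_of_lt (by omega : n - 1 < n), show n - 1 ≠ 0 by omega]

theorem stdFan_of_pos_of_lt {j : ℕ} (hj : 1 ≤ j) (hjn : j + 2 ≤ n) :
    stdFan n j = ((n : ℤ) - 2 - j, 1) := by
  simp [stdFan, Nat.mod_eq_of_lt (by omega : j < n), show j ≠ 0 by omega, show j ≠ n - 1 by omega]

theorem cross_stdFan_succ (hn : 3 ≤ n) (i : ℕ) : cross (stdFan n i) (stdFan n (i + 1)) = 1 := by
  have key : ∀ j < n, cross (stdFan n j) (stdFan n (j + 1)) = 1 := by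
    intro j hj
    have hcases : j = 0 ∨ (1 ≤ j ∧ j + 3 ≤ n) ∨ j + 2 = n ∨ j + 1 = n := by omega
    rcases hcases with rfl | ⟨h1, hmid⟩ | hpen | hlast
    · rw [stdFan_zero, stdFan_of_pos_of_lt le_rfl (by omega)]
      simp [cross]
    · rw [stdFan_of_pos_of_lt h1 (by omega), stdFan_of_pos_of_lt (by omega) hmid]
      simp [cross]
    · rw [stdFan_of_pos_of_lt (by omega) hpen.le, show j + 1 = n - 1 by omega,
        stdFan_sub_one (by omega), ← hpen]
      simp [cross]
    · rw [hlast, show j = n - 1 by omega, stdFan_sub_one (by omega), stdFan_self]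
      simp [cross]
  have h := (stdFan_periodic n).map_mod_nat
  rw [← h i, ← h (i + 1), ← Nat.mod_add_mod, h (i % n + 1)]
  exact key _ (Nat.mod_lt i (by omega))

theorem nonneg_and_le_of_mem_sector_stdFan (hn : 3 ≤ n) {i : ℕ} (hi : i + 3 ≤ n) {x : ℝ × ℝ}
    (hx : x ∈ sector (stdFan n) i) : 0 ≤ x.2 ∧ ((n : ℝ) - 3 - i) * x.2 ≤ x.1 := by
  rw [mem_sector_iff (cross_stdFan_succ hn i),
    stdFan_of_pos_of_lt (j := i + 1) (by omega) (by omega)] at hx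
  rcases Nat.eq_zero_or_pos i with rfl | hi1
  · rw [stdFan_zero] at hx
    simp only [cross, ofInt] at hx
    push_cast at hx ⊢
    constructor <;> linarith
  · rw [stdFan_of_pos_of_lt hi1 (by omega)] at hx
    simp only [cross, ofInt] at hx
    push_cast at hx
    constructor <;> linarith

theorem le_of_mem_sector_stdFan (hn : 3 ≤ n) {j : ℕ} (hj : 1 ≤ j) (hjn : j + 2 ≤ n) {x : ℝ × ℝ}
    (hx : x ∈ sector (stdFan n) j) : x.1 ≤ ((n : ℝ) - 2 - j) * x.2 := by
  rw [mem_sector_iff (cross_stdFan_succ hn j), stdFan_of_pos_of_lt hj hjn] at hx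
  simp only [cross, ofInt] at hx
  push_cast at hx
  linarith [hx.1]

theorem nonpos_of_mem_sector_stdFan_sub_one (hn : 3 ≤ n) {x : ℝ × ℝ}
    (hx : x ∈ sector (stdFan n) (n - 1)) : x.2 ≤ 0 := by
  rw [mem_sector_iff (cross_stdFan_succ hn _), Nat.sub_add_cancel (by omega), stdFan_self] at hx
  simpa [cross, ofInt] using hx.2

theorem eq_zero_of_mem_sector_stdFan (hn : 3 ≤ n) {i j : ℕ} (hij : i + 2 ≤ j) (hjn : j < n)
    (hi : i = 0 → j + 1 < n) {x : ℝ × ℝ} (hxi : x ∈ sector (stdFan n) i)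
    (hxj : x ∈ sector (stdFan n) j) : x = 0 := by
  obtain ⟨hy, hxlow⟩ := nonneg_and_le_of_mem_sector_stdFan hn (by omega) hxi
  obtain ⟨hy0, hxup⟩ : x.2 = 0 ∧ x.1 ≤ 0 := by
    rcases Nat.lt_or_ge (j + 1) n with hj | hj
    · have hxup := le_of_mem_sector_stdFan hn (by omega) hj hxj
      have hji : (i : ℝ) + 2 ≤ j := by exact_mod_cast hij
      have hy0 : x.2 = 0 := by nlinarith
      exact ⟨hy0, by simpa [hy0] using hxup⟩
    · obtain rfl : j = n - 1 := by omega
      have hy0 := le_antisymm (nonpos_of_mem_sector_stdFan_sub_one hn hxj) hy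
      have hi1 : 1 ≤ i := Nat.pos_of_ne_zero fun h => by have := hi h; omega
      have hxup := le_of_mem_sector_stdFan hn hi1 (by omega) hxi
      exact ⟨hy0, by simpa [hy0] using hxup⟩
  rw [hy0, mul_zero] at hxlow
  exact Prod.ext (le_antisymm hxup hxlow) hy0

theorem adjacent_of_mem_sector_stdFan (hn : 3 ≤ n) :
    ∀ i < n, ∀ j < n, ∀ x ∈ sector (stdFan n) i, x ∈ sector (stdFan n) j → x ≠ 0 →
      i = j ∨ (i + 1) % n = j ∨ (j + 1) % n = i := by
  intro i hi j hj x hxi hxj hx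
  wlog hij : i ≤ j generalizing i j
  · rcases this j hj i hi hxj hxi (by omega) with h | h | h
    exacts [Or.inl h.symm, Or.inr (Or.inr h), Or.inr (Or.inl h)]
  rcases (by omega : j = i ∨ j = i + 1 ∨ (i = 0 ∧ j = n - 1) ∨ (i + 2 ≤ j ∧ (i = 0 → j + 1 < n)))
    with h | h | ⟨rfl, rfl⟩ | ⟨hij, hi0⟩
  · exact Or.inl h.symm
  · exact Or.inr (Or.inl (by rw [Nat.mod_eq_of_lt (by omega), h]))
  · exact Or.inr (Or.inr (by rw [Nat.sub_add_cancel (by omega), Nat.mod_self]))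
  · exact absurd (eq_zero_of_mem_sector_stdFan hn hij hj hi0 hxi hxj) hx

theorem exists_mem_sector_stdFan (hn : 3 ≤ n) (x : ℝ × ℝ) : ∃ i, x ∈ sector (stdFan n) i := by
  set g : ℕ → ℝ := fun j => cross (ofInt (stdFan n j)) x with hg
  have hzero : g 0 = x.2 := by simp [hg, stdFan_zero, cross, ofInt]
  have hself : g n = x.2 := by simp [hg, stdFan_self, cross, ofInt]
  have hpen : g (n - 2) = -x.1 := by
    simp only [hg]
    rw [stdFan_of_pos_of_lt (n := n) (j := n - 2) (by omega) (by omega)]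
    simp [cross, ofInt, Nat.cast_sub (by omega : 2 ≤ n)]
  have hlast : g (n - 1) = x.1 - x.2 := by
    simp only [hg]
    rw [stdFan_sub_one (by omega)]
    simp [cross, ofInt]
    ring
  -- `v₀ + v_{n-2} + v_{n-1} = 0`, so `g 0`, `g (n - 2)`, `g (n - 1)` cannot share a strict sign
  obtain ⟨a, b, hab, ha, hb⟩ : ∃ a b, a < b ∧ 0 ≤ g a ∧ g b ≤ 0 := by
    rcases le_total 0 x.2 with hy | hy <;> rcases le_total 0 x.1 with hx | hx
    · exact ⟨0, n - 2, by omega, by rw [hzero]; exact hy, by rw [hpen]; linarith⟩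
    · exact ⟨0, n - 1, by omega, by rw [hzero]; exact hy, by rw [hlast]; linarith⟩
    · exact ⟨n - 1, n, by omega, by rw [hlast]; linarith, by rw [hself]; exact hy⟩
    · exact ⟨n - 2, n, by omega, by rw [hpen]; linarith, by rw [hself]; exact hy⟩
  obtain ⟨i, hi⟩ := exists_nonneg_nonpos_succ hab ha hb
  exact ⟨i, (mem_sector_iff (cross_stdFan_succ hn i) x).2 hi⟩

theorem stdFan_ne_stdFan_zero {k : ℕ} (hk : 1 ≤ k) (hkn : k < n) : stdFan n k ≠ stdFan n 0 := by
  rw [stdFan_zero]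
  simp only [stdFan, Nat.mod_eq_of_lt hkn, show k ≠ 0 by omega, if_false]
  split_ifs <;> simp

theorem isUnimodularFan_stdFan (hn : 3 ≤ n) : IsUnimodularFan (stdFan n) n where
  pos := by omega
  periodic := stdFan_periodic n
  cross_eq_one := cross_stdFan_succ hn
  exists_mem_sector := exists_mem_sector_stdFan hn
  adjacent_of_mem_sector := adjacent_of_mem_sector_stdFan hn

end StdFan

end FanRotation

open FanRotation

/-- for every n ≥ 3 there is an orientation preserving piecewise linear
homeomorphism of ℝ² preserving ℤ² which has order exactly n. -/
theorem stmt9 (n : ℕ) (hn : 3 ≤ n) :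
    ∃ F : ℝ × ℝ → ℝ × ℝ,
      (∃ H : (ℝ × ℝ) ≃ₜ (ℝ × ℝ), ⇑H = F) ∧
      (∃ (d : ℕ) (v : ℕ → ℤ × ℤ), 1 ≤ d ∧ v d = v 0 ∧
        (∀ i < d, 0 < (v i).1 * (v (i+1)).2 - (v i).2 * (v (i+1)).1) ∧
        (⋃ i ∈ Finset.range d, secR (v i) (v (i+1))) = Set.univ ∧
        (∀ i < d, ∃ a b c e : ℝ, 0 < a * e - b * c ∧
          ∀ x ∈ secR (v i) (v (i+1)),
            F x = (a * x.1 + b * x.2, c * x.1 + e * x.2))) ∧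
      F '' latticePts = latticePts ∧
      F^[n] = id ∧ (∀ k, 1 ≤ k → k < n → F^[k] ≠ id) := by
  have hw := isUnimodularFan_stdFan hn
  have hper := hw.iterate_rotation_period
  refine ⟨rotation (stdFan n),
    exists_homeomorph_of_iterate_eq_id hw.continuous_rotation hper hw.pos,
    ⟨n, stdFan n, hw.pos, hw.periodic.eq, fun i _ => ?_, hw.iUnion_sector,
      fun i _ => hw.exists_linear_eq_rotation i⟩,
    image_eq_of_mapsTo_of_iterate_eq_id hw.mapsTo_rotation_latticePts hper hw.pos, hper,
    fun k hk hkn => hw.iterate_rotation_ne_id (stdFan_ne_stdFan_zero hk hkn)⟩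
  have h := hw.cross_eq_one i
  simp only [cross] at h
  omega
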